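/- Let A be a residuated lattice. If every purely-prime filter of A is principal, then every pure filter of A is principal. -/
import Mathlib


structure ResiduatedLattice (A : Type*) [Lattice A] [BoundedOrder A] where
  mul : A → A → A
  himp : A → A → A
  mul_comm : ∀ x y : A, mul x y = mul y x
  mul_assoc : ∀ x y z : A, mul (mul x y) z = mul x (mul y z)
  mul_top : ∀ x : A, mul x ⊤ = x
  adj : ∀ x y z : A, mul x z ≤ y ↔ z ≤ himp x y

namespace ResiduatedLattice

variable {A : Type*} [Lattice A] [BoundedOrder A]

/-- ¬a := a → 0 -/
def neg (R : ResiduatedLattice A) (a : A) : A := R.himp a ⊥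

/-- A filter: nonempty, closed under ⊙, and closed under joining with arbitrary elements. -/
def IsFilter (R : ResiduatedLattice A) (F : Set A) : Prop :=
  F.Nonempty ∧ (∀ x ∈ F, ∀ y ∈ F, R.mul x y ∈ F) ∧ (∀ x ∈ F, ∀ y : A, x ⊔ y ∈ F)

/-- Join of two filters: the filter generated by their union. -/
def FJoin (R : ResiduatedLattice A) (F G : Set A) : Set A :=
  {c | ∃ f ∈ F, ∃ g ∈ G, R.mul f g ≤ c}

/-- Coannulet a⊥ = {x | x ∨ a = 1}. -/
def perp (R : ResiduatedLattice A) (a : A) : Set A := {x | x ⊔ a = ⊤}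

/-- Powers aⁿ with a⁰ = 1 = ⊤. -/
def pow (R : ResiduatedLattice A) (a : A) : ℕ → A
  | 0 => ⊤
  | n + 1 => R.mul a (pow R a n)

/-- Filter generated by a filter F together with an element x. -/
def FGen (R : ResiduatedLattice A) (F : Set A) (x : A) : Set A :=
  {a | ∃ f ∈ F, ∃ n : ℕ, R.mul f (R.pow x n) ≤ a}

/-- Principal filter generated by a. -/
def principal (R : ResiduatedLattice A) (a : A) : Set A :=
  {b | ∃ n : ℕ, R.pow a n ≤ b}

/-- The sink σ(F) = {a | a⊥ ⋎ F = A}. -/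
def sink (R : ResiduatedLattice A) (F : Set A) : Set A :=
  {a | R.FJoin (R.perp a) F = Set.univ}

/-- Purity condition: a⊥ ⋎ F = A for every a ∈ F. -/
def PureOn (R : ResiduatedLattice A) (F : Set A) : Prop :=
  ∀ a ∈ F, R.FJoin (R.perp a) F = Set.univ

/-- Prime filter. -/
def IsPrime (R : ResiduatedLattice A) (F : Set A) : Prop :=
  R.IsFilter F ∧ F ≠ Set.univ ∧ ∀ x y : A, x ⊔ y ∈ F → x ∈ F ∨ y ∈ F

/-- Minimal prime filter. -/
def IsMinimalPrime (R : ResiduatedLattice A) (F : Set A) : Prop :=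
  R.IsPrime F ∧ ∀ G : Set A, R.IsPrime G → G ⊆ F → G = F

/-- Filter generated by an arbitrary set X. -/
def gen (R : ResiduatedLattice A) (X : Set A) : Set A :=
  {a | ∃ l : List A, (∀ x ∈ l, x ∈ X) ∧ l.foldr R.mul ⊤ ≤ a}

/-- Purely-prime filter: proper pure filter p such that F₁ ∩ F₂ = p for pure filters
implies F₁ = p or F₂ = p. -/
def PurelyPrime (R : ResiduatedLattice A) (p : Set A) : Prop :=
  R.IsFilter p ∧ R.PureOn p ∧ p ≠ Set.univ ∧
    ∀ F₁ F₂ : Set A, R.IsFilter F₁ → R.PureOn F₁ → R.IsFilter F₂ → R.PureOn F₂ →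
      F₁ ∩ F₂ = p → F₁ = p ∨ F₂ = p

/-- (H : a) = {x | x ∨ a ∈ H}. -/
def res (R : ResiduatedLattice A) (H : Set A) (a : A) : Set A :=
  {x | x ⊔ a ∈ H}

end ResiduatedLattice

open ResiduatedLattice

variable {A : Type*} [Lattice A] [BoundedOrder A]

namespace ResiduatedLattice

variable {A : Type*} [Lattice A] [BoundedOrder A] (R : ResiduatedLattice A)

lemma mul_mono_right {y z : A} (x : A) (h : y ≤ z) : R.mul x y ≤ R.mul x z :=
  (R.adj x (R.mul x z) y).mpr (h.trans ((R.adj x (R.mul x z) z).mp le_rfl))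

lemma mul_mono_left {y z : A} (x : A) (h : y ≤ z) : R.mul y x ≤ R.mul z x := by
  rw [R.mul_comm y x, R.mul_comm z x]; exact R.mul_mono_right x h

lemma mul_le_left (x y : A) : R.mul x y ≤ x := by
  have := R.mul_mono_right x (le_top (a := y))
  rwa [R.mul_top] at this

lemma mul_le_right (x y : A) : R.mul x y ≤ y := by
  rw [R.mul_comm]; exact R.mul_le_left y x

lemma mul_sup (x y z : A) : R.mul x (y ⊔ z) = R.mul x y ⊔ R.mul x z := by
  apply le_antisymm
  · refine (R.adj x _ _).mpr (sup_le ?_ ?_)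
    · exact (R.adj x _ y).mp le_sup_left
    · exact (R.adj x _ z).mp le_sup_right
  · exact sup_le (R.mul_mono_right x le_sup_left) (R.mul_mono_right x le_sup_right)

lemma pow_mono {a b : A} (h : a ≤ b) : ∀ n, R.pow a n ≤ R.pow b n := by
  intro n; induction n with
  | zero => exact le_rfl
  | succ n ih =>
    exact le_trans (R.mul_mono_left _ h) (R.mul_mono_right b ih)

lemma pow_sup_le (a b : A) : ∀ m k, R.pow (a ⊔ b) (m + k) ≤ R.pow a m ⊔ R.pow b k := by
  intro m
  induction m with
  | zero => intro k; simp [pow]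
  | succ m ihm =>
    intro k
    induction k with
    | zero =>
      have : R.pow (a ⊔ b) (m + 1 + 0) ≤ R.pow b 0 := by simp [pow]
      exact this.trans le_sup_right
    | succ k ihk =>
      have hX : R.pow (a ⊔ b) (m + 1 + (k + 1)) =
          R.mul a (R.pow (a ⊔ b) (m + (k + 1))) ⊔ R.mul b (R.pow (a ⊔ b) (m + 1 + k)) := by
        have h1 : m + 1 + (k + 1) = (m + (k + 1)) + 1 := by omega
        have h2 : m + (k + 1) = m + 1 + k := by omega
        rw [h1]
        show R.mul (a ⊔ b) (R.pow (a ⊔ b) (m + (k+1))) = _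
        rw [R.mul_comm, R.mul_sup, R.mul_comm _ a, R.mul_comm _ b, h2]
      rw [hX]
      apply sup_le
      · refine le_trans (R.mul_mono_right a (ihm (k + 1))) ?_
        rw [R.mul_sup]
        exact sup_le le_sup_left ((R.mul_le_right a _).trans le_sup_right)
      · refine le_trans (R.mul_mono_right b ihk) ?_
        rw [R.mul_sup]
        exact sup_le ((R.mul_le_right b _).trans le_sup_left) le_sup_right

lemma principal_inter (a b : A) :
    R.principal a ∩ R.principal b = R.principal (a ⊔ b) := by
  ext x
  constructor
  · rintro ⟨⟨m, hm⟩, ⟨k, hk⟩⟩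
    exact ⟨m + k, (R.pow_sup_le a b m k).trans (sup_le hm hk)⟩
  · rintro ⟨n, hn⟩
    exact ⟨⟨n, (R.pow_mono le_sup_left n).trans hn⟩, ⟨n, (R.pow_mono le_sup_right n).trans hn⟩⟩

lemma top_mem_of_filter {F : Set A} (hF : R.IsFilter F) : ⊤ ∈ F := by
  obtain ⟨⟨x, hx⟩, _, hsup⟩ := hF
  have := hsup x hx ⊤
  simpa using this

lemma mem_of_le {F : Set A} (hF : R.IsFilter F) {x y : A} (hx : x ∈ F) (hxy : x ≤ y) : y ∈ F := by
  have := hF.2.2 x hx y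
  rwa [sup_eq_right.mpr hxy] at this

lemma pow_mem {F : Set A} (hF : R.IsFilter F) {a : A} (ha : a ∈ F) (n : ℕ) : R.pow a n ∈ F := by
  induction n with
  | zero => exact R.top_mem_of_filter hF
  | succ n ih => exact hF.2.1 a ha _ ih

lemma principal_subset {F : Set A} (hF : R.IsFilter F) {a : A} (ha : a ∈ F) :
    R.principal a ⊆ F := by
  rintro x ⟨n, hn⟩
  exact R.mem_of_le hF (R.pow_mem hF ha n) hn

lemma principal_univ : Set.univ = R.principal (⊥ : A) := by
  ext x
  simp only [Set.mem_univ, true_iff]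
  refine ⟨1, ?_⟩
  show R.mul ⊥ (R.pow ⊥ 0) ≤ x
  show R.mul ⊥ ⊤ ≤ x
  rw [R.mul_top]; exact bot_le

end ResiduatedLattice

theorem stmt16 (R : ResiduatedLattice A)
    (h : ∀ p : Set A, R.PurelyPrime p → ∃ a : A, p = R.principal a) :
    ∀ F : Set A, R.IsFilter F → R.PureOn F → ∃ a : A, F = R.principal a := by
  intro F hF hFp
  by_contra hnp
  -- Zorn on the set of non-principal pure filters
  set S : Set (Set A) :=
    {G | R.IsFilter G ∧ R.PureOn G ∧ ¬∃ a : A, G = R.principal a} with hS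
  have hFS : F ∈ S := ⟨hF, hFp, hnp⟩
  have hchainub : ∀ c ⊆ S, IsChain (· ⊆ ·) c → c.Nonempty →
      ∃ ub ∈ S, ∀ s ∈ c, s ⊆ ub := by
    -- M is purely prime
    intro c hcS hchain hcne
    refine ⟨⋃₀ c, ⟨?_, ?_, ?_⟩, fun s hs => Set.subset_sUnion_of_mem hs⟩
    · -- ⋃₀ c is a filter
      obtain ⟨G, hG⟩ := hcne
      constructor
      · obtain ⟨x, hx⟩ := (hcS hG).1.1
        exact ⟨x, G, hG, hx⟩
      constructor
      · rintro x ⟨G₁, hG₁, hx⟩ y ⟨G₂, hG₂, hy⟩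
        rcases hchain.total hG₁ hG₂ with hle | hle
        · exact ⟨G₂, hG₂, (hcS hG₂).1.2.1 x (hle hx) y hy⟩
        · exact ⟨G₁, hG₁, (hcS hG₁).1.2.1 x hx y (hle hy)⟩
      · rintro x ⟨G₁, hG₁, hx⟩ y
        exact ⟨G₁, hG₁, (hcS hG₁).1.2.2 x hx y⟩
    · -- ⋃₀ c is pure
      rintro a ⟨G₁, hG₁, ha⟩
      apply Set.eq_univ_of_univ_subset
      rw [← (hcS hG₁).2.1 a ha]
      rintro x ⟨f, hf, g, hg, hle⟩
      exact ⟨f, hf, g, ⟨G₁, hG₁, hg⟩, hle⟩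
    · -- ⋃₀ c is not principal
      rintro ⟨a, ha⟩
      have haU : a ∈ ⋃₀ c := by
        rw [ha]
        refine ⟨1, ?_⟩
        show R.mul a ⊤ ≤ a
        rw [R.mul_top]
      obtain ⟨G, hGc, haG⟩ := haU
      have : G = R.principal a :=
        le_antisymm ((Set.subset_sUnion_of_mem hGc).trans ha.le)
          (R.principal_subset (hcS hGc).1 haG)
      exact (hcS hGc).2.2 ⟨a, this⟩
  obtain ⟨M, -, hMS, hMmax⟩ := zorn_subset_nonempty S hchainub F hFS
  obtain ⟨hMfil, hMpure, hMnp⟩ := hMS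
  have hMne : M ≠ Set.univ := by
    intro he
    exact hMnp ⟨⊥, he.trans (R.principal_univ)⟩
  have hpp : R.PurelyPrime M := by
    refine ⟨hMfil, hMpure, hMne, ?_⟩
    intro F₁ F₂ h1f h1p h2f h2p hint
    by_contra hcon
    push_neg at hcon
    obtain ⟨h1ne, h2ne⟩ := hcon
    have hM1 : M ⊆ F₁ := hint ▸ Set.inter_subset_left
    have hM2 : M ⊆ F₂ := hint ▸ Set.inter_subset_right
    have h1nS : F₁ ∉ S := fun hin => h1ne (le_antisymm (hMmax hin hM1) hM1)
    have h2nS : F₂ ∉ S := fun hin => h2ne (le_antisymm (hMmax hin hM2) hM2)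
    have h1pr : ∃ a, F₁ = R.principal a := by
      by_contra hc; exact h1nS ⟨h1f, h1p, hc⟩
    have h2pr : ∃ a, F₂ = R.principal a := by
      by_contra hc; exact h2nS ⟨h2f, h2p, hc⟩
    obtain ⟨a, ha⟩ := h1pr
    obtain ⟨b, hb⟩ := h2pr
    apply hMnp
    exact ⟨a ⊔ b, by rw [← hint, ha, hb, R.principal_inter]⟩
  obtain ⟨a, ha⟩ := h M hpp
  exact hMnp ⟨a, ha⟩
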